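/- Let Γ = ⟨α_1, …, α_k⟩ ⊂ ℕ^d be an affine semigroup with Δ(Γ) nonempty. Then every element of Δ(Γ) is a multiple of min Δ(Γ) and lies in the interval [min Δ(Γ), max Δ(Γ)]; in particular min Δ(Γ) = gcd Δ(Γ). -/

import Mathlib

open Finset

/-- The factorization homomorphism `φ_Γ : ℕ^k → ℕ^d` determined by the
generators `α 1, …, α k`. -/
def phi {d k : ℕ} (α : Fin k → Fin d → ℕ) (z : Fin k → ℕ) : Fin d → ℕ :=
  ∑ i, z i • α i

/-- The length `|z|` of a factorization. -/
def len {k : ℕ} (z : Fin k → ℕ) : ℕ := ∑ i, z i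

/-- The length set `L_Γ(γ)`. -/
def lengthSet {d k : ℕ} (α : Fin k → Fin d → ℕ) (γ : Fin d → ℕ) : Set ℕ :=
  len '' {z | phi α z = γ}

/-- The set of successive differences (gaps) of a set of naturals. -/
def deltaOf (L : Set ℕ) : Set ℕ :=
  {δ | 0 < δ ∧ ∃ a, a ∈ L ∧ a + δ ∈ L ∧ ∀ c ∈ L, ¬(a < c ∧ c < a + δ)}

/-- The delta set `Δ(Γ)` of the affine semigroup generated by `α`. -/
def deltaSet {d k : ℕ} (α : Fin k → Fin d → ℕ) : Set ℕ :=
  ⋃ γ ∈ Set.range (phi α), deltaOf (lengthSet α γ)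

/-!
Factorizations of the same element can be combined linearly, and between any two lengths of one
element there is a gap of `Δ(Γ)` no larger than their difference. Applied to
`u • (z₁, z₁') + v • (z₂', z₂)`, where `(z_i, z_i')` realise `δ_i ∈ Δ(Γ)` and
`u δ₁ = v δ₂ + gcd δ₁ δ₂`, this gives an element of `Δ(Γ)` below `gcd δ₁ δ₂`, so `min Δ(Γ)`
divides every element of `Δ(Γ)`.

Boundedness comes from Dickson's lemma: the minimal pairs `(x, y)` with `φ x = φ y`, `|x| < |y|`
form a finite antichain. If `(z, z')` realises a gap `δ` and `(x, y) ≤ (z, z')` is minimal, then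
`z - x + y` factors the same element with length in `(|z|, |z| + δ]`, so `δ ≤ |y| - |x|`.
-/

theorem Nat.exists_mul_eq_mul_add_gcd {a b : ℕ} (h : Nat.gcd a b < b) :
    ∃ u v : ℕ, u * a = v * b + Nat.gcd a b := by
  obtain ⟨m, -, hm⟩ := Nat.exists_mul_mod_eq_gcd h
  refine ⟨m, a * m / b, ?_⟩
  rw [← hm, mul_comm m, mul_comm _ b, Nat.div_add_mod]

theorem exists_mem_deltaOf_le_sub {L : Set ℕ} {a b : ℕ} (ha : a ∈ L) (hb : b ∈ L)
    (hab : a < b) : ∃ δ ∈ deltaOf L, δ ≤ b - a := by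
  induction b using Nat.strong_induction_on with
  | _ b ih =>
    by_cases hbetween : ∃ c ∈ L, a < c ∧ c < b
    · obtain ⟨c, hc, hac, hcb⟩ := hbetween
      obtain ⟨δ, hδ, hle⟩ := ih c hcb hc hac
      exact ⟨δ, hδ, by omega⟩
    · push Not at hbetween
      refine ⟨b - a, ⟨by omega, a, ha, by rwa [Nat.add_sub_cancel' hab.le], ?_⟩, le_rfl⟩
      rintro c hc ⟨hac, hcb⟩
      exact absurd (hbetween c hc hac) (by omega)

section Factorizations

variable {d k : ℕ} (α : Fin k → Fin d → ℕ)

theorem phi_add (x y : Fin k → ℕ) : phi α (x + y) = phi α x + phi α y := by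
  simp [phi, add_smul, Finset.sum_add_distrib]

theorem phi_smul (c : ℕ) (x : Fin k → ℕ) : phi α (c • x) = c • phi α x := by
  simp [phi, Finset.smul_sum, mul_smul]

theorem len_add (x y : Fin k → ℕ) : len (x + y) = len x + len y := by
  simp [len, Finset.sum_add_distrib]

theorem len_smul (c : ℕ) (x : Fin k → ℕ) : len (c • x) = c * len x := by
  simp [len, Finset.mul_sum]

theorem len_mono : Monotone (len : (Fin k → ℕ) → ℕ) :=
  fun _ _ h => Finset.sum_le_sum fun i _ => h i

theorem len_tsub_add {x y z : Fin k → ℕ} (hxz : x ≤ z) :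
    len (z - x + y) = len z - len x + len y := by
  have hsplit : len (z - x) + len x = len z := by rw [← len_add, tsub_add_cancel_of_le hxz]
  rw [len_add]
  omega

theorem phi_tsub_add {x y z : Fin k → ℕ} (hxz : x ≤ z) (hxy : phi α x = phi α y) :
    phi α (z - x + y) = phi α z := by
  rw [phi_add, ← hxy, ← phi_add, tsub_add_cancel_of_le hxz]

theorem exists_of_mem_deltaSet {δ : ℕ} (hδ : δ ∈ deltaSet α) :
    0 < δ ∧ ∃ z z' : Fin k → ℕ, phi α z = phi α z' ∧ len z' = len z + δ ∧
      ∀ w, phi α w = phi α z → ¬(len z < len w ∧ len w < len z + δ) := by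
  simp only [deltaSet, Set.mem_iUnion, Set.mem_range, exists_prop] at hδ
  obtain ⟨γ, -, hδpos, a, ⟨z, hz, rfl⟩, ⟨z', hz', hlen⟩, hgap⟩ := hδ
  refine ⟨hδpos, z, z', hz.trans hz'.symm, hlen, fun w hw => hgap _ ⟨w, ?_, rfl⟩⟩
  exact hw.trans hz

theorem exists_mem_deltaSet_le_sub {z z' : Fin k → ℕ} (hphi : phi α z = phi α z')
    (hlen : len z < len z') : ∃ δ ∈ deltaSet α, δ ≤ len z' - len z := by
  obtain ⟨δ, hδ, hle⟩ :=
    exists_mem_deltaOf_le_sub (L := lengthSet α (phi α z)) ⟨z, rfl, rfl⟩ ⟨z', hphi.symm, rfl⟩ hlen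
  exact ⟨δ, Set.mem_biUnion ⟨z, rfl⟩ hδ, hle⟩

theorem exists_mem_deltaSet_le_mul_sub_mul {δ₁ δ₂ u v : ℕ} (h₁ : δ₁ ∈ deltaSet α)
    (h₂ : δ₂ ∈ deltaSet α) (huv : v * δ₂ < u * δ₁) :
    ∃ δ ∈ deltaSet α, δ ≤ u * δ₁ - v * δ₂ := by
  obtain ⟨-, z₁, z₁', hphi₁, hlen₁, -⟩ := exists_of_mem_deltaSet α h₁
  obtain ⟨-, z₂, z₂', hphi₂, hlen₂, -⟩ := exists_of_mem_deltaSet α h₂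
  have hphi : phi α (u • z₁ + v • z₂') = phi α (u • z₁' + v • z₂) := by
    simp only [phi_add, phi_smul, hphi₁, hphi₂]
  have hlen : len (u • z₁' + v • z₂) = len (u • z₁ + v • z₂') + (u * δ₁ - v * δ₂) := by
    simp only [len_add, len_smul, hlen₁, hlen₂, Nat.mul_add]
    omega
  obtain ⟨δ, hδ, hle⟩ := exists_mem_deltaSet_le_sub α hphi (by omega)
  exact ⟨δ, hδ, by omega⟩

theorem exists_mem_deltaSet_le_gcd {δ₁ δ₂ : ℕ} (h₁ : δ₁ ∈ deltaSet α) (h₂ : δ₂ ∈ deltaSet α) :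
    ∃ δ ∈ deltaSet α, δ ≤ Nat.gcd δ₁ δ₂ := by
  by_cases hlt : Nat.gcd δ₁ δ₂ < δ₂
  · obtain ⟨u, v, huv⟩ := Nat.exists_mul_eq_mul_add_gcd hlt
    have hpos : 0 < Nat.gcd δ₁ δ₂ := Nat.gcd_pos_of_pos_left _ (exists_of_mem_deltaSet α h₁).1
    obtain ⟨δ, hδ, hle⟩ := exists_mem_deltaSet_le_mul_sub_mul α h₁ h₂ (u := u) (v := v) (by omega)
    exact ⟨δ, hδ, by omega⟩
  · exact ⟨δ₂, h₂, not_lt.mp hlt⟩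

def lengthIncreasingPairs : Set ((Fin k → ℕ) × (Fin k → ℕ)) :=
  {p | phi α p.1 = phi α p.2 ∧ len p.1 < len p.2}

theorem finite_setOf_minimal_lengthIncreasingPairs :
    {p | Minimal (· ∈ lengthIncreasingPairs α) p}.Finite :=
  WellQuasiOrderedLE.finite_of_isAntichain (setOfPred_minimal_antichain _)

theorem bddAbove_deltaSet : BddAbove (deltaSet α) := by
  obtain ⟨B, hB⟩ := ((finite_setOf_minimal_lengthIncreasingPairs α).image
    fun p => len p.2 - len p.1).bddAbove
  refine ⟨B, fun δ hδ => ?_⟩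
  obtain ⟨hδpos, z, z', hphi, hlen, hgap⟩ := exists_of_mem_deltaSet α hδ
  obtain ⟨⟨x, y⟩, hle, hmin⟩ := exists_minimal_le_of_wellFoundedLT
    (· ∈ lengthIncreasingPairs α) (z, z') ⟨hphi, show len z < len z' by omega⟩
  obtain ⟨hxz, -⟩ : x ≤ z ∧ y ≤ z' := hle
  obtain ⟨hxy, hlenxy⟩ : phi α x = phi α y ∧ len x < len y := hmin.prop
  have hw := hgap (z - x + y) (phi_tsub_add α hxz hxy)
  rw [len_tsub_add hxz] at hw
  have hlen_xz : len x ≤ len z := len_mono hxz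
  have hB_xy : len y - len x ≤ B := hB ⟨(x, y), hmin, rfl⟩
  omega

end Factorizations

theorem stmt2_general {d k : ℕ} (α : Fin k → Fin d → ℕ)
    (hΔ : (deltaSet α).Nonempty) :
    (∀ n ∈ deltaSet α,
      sInf (deltaSet α) ∣ n ∧ sInf (deltaSet α) ≤ n ∧ n ≤ sSup (deltaSet α)) ∧
    (∀ m : ℕ, (∀ n ∈ deltaSet α, m ∣ n) → m ∣ sInf (deltaSet α)) := by
  have hmem : sInf (deltaSet α) ∈ deltaSet α := Nat.sInf_mem hΔ
  have hpos : 0 < sInf (deltaSet α) := (exists_of_mem_deltaSet α hmem).1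
  refine ⟨fun n hn => ⟨?_, Nat.sInf_le hn, le_csSup (bddAbove_deltaSet α) hn⟩,
    fun m hm => hm _ hmem⟩
  obtain ⟨δ, hδ, hle⟩ := exists_mem_deltaSet_le_gcd α hmem hn
  have hgcd : Nat.gcd (sInf (deltaSet α)) n = sInf (deltaSet α) :=
    le_antisymm (Nat.le_of_dvd hpos (Nat.gcd_dvd_left _ _)) ((Nat.sInf_le hδ).trans hle)
  exact hgcd ▸ Nat.gcd_dvd_right _ _

/-- If `Γ = ⟨α_1,…,α_k⟩ ⊂ ℕ^d` is an affine semigroup (minimally generated by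
`α_1,…,α_k`) with `Δ(Γ)` nonempty, then every element of `Δ(Γ)` is a multiple of
`min Δ(Γ)` and lies in `[min Δ(Γ), max Δ(Γ)]`; in particular
`min Δ(Γ) = gcd Δ(Γ)`. -/
theorem stmt2 {d k : ℕ} (α : Fin k → Fin d → ℕ)
    (hne : ∀ i, α i ≠ 0)
    (hmin : ∀ i, α i ∉ AddSubmonoid.closure (α '' {j | j ≠ i}))
    (hΔ : (deltaSet α).Nonempty) :
    (∀ n ∈ deltaSet α,
      sInf (deltaSet α) ∣ n ∧ sInf (deltaSet α) ≤ n ∧ n ≤ sSup (deltaSet α)) ∧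
    (∀ m : ℕ, (∀ n ∈ deltaSet α, m ∣ n) → m ∣ sInf (deltaSet α)) :=
  stmt2_general α hΔ
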